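/- Let H be a real Hilbert space, let S be a bounded self-adjoint operator on H with ⟨x, S x⟩ ≤ 0 for all x ∈ H, let A be a bounded skew-adjoint operator on H (i.e. ⟨A x, y⟩ = −⟨x, A y⟩ for all x, y), and let λ > 0. Assume λ − S and λ − S − A are bijective with bounded inverses. Then for every f ∈ H, ⟨f, (λ − S − A)⁻¹ f⟩ = inf over g ∈ H of ( ⟨f − A g, (λ − S)⁻¹ (f − A g)⟩ + ⟨g, (λ − S) g⟩ ). -/
import Mathlib


open RealInnerProductSpace

theorem stmt_2 {H : Type*} [NormedAddCommGroup H] [InnerProductSpace ℝ H] [CompleteSpace H]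
    (S A : H →L[ℝ] H)
    (hS : ∀ x y : H, ⟪S x, y⟫ = ⟪x, S y⟫)
    (hSneg : ∀ x : H, ⟪x, S x⟫ ≤ 0)
    (hA : ∀ x y : H, ⟪A x, y⟫ = -⟪x, A y⟫)
    (lam : ℝ) (hlam : 0 < lam)
    (R T : H →L[ℝ] H)
    (hR1 : ∀ x : H, lam • R x - S (R x) = x)
    (hR2 : ∀ x : H, R (lam • x - S x) = x)
    (hT1 : ∀ x : H, lam • T x - S (T x) - A (T x) = x)
    (hT2 : ∀ x : H, T (lam • x - S x - A x) = x)
    (f : H) :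
    ⟪f, T f⟫ = ⨅ g : H, (⟪f - A g, R (f - A g)⟫ + ⟪g, lam • g - S g⟫) := by
  -- lower bound: for every g the functional dominates ⟪f, T f⟫
  have key : ∀ g : H, ⟪f, T f⟫ ≤ ⟪f - A g, R (f - A g)⟫ + ⟪g, lam • g - S g⟫ := by
    intro g
    set v := R (f - A g) with hv
    have hv1 : lam • v - S v = f - A g := hR1 _
    set u := T f with hu
    have hu1 : lam • u - S u - A u = f := hT1 f
    set d := v - u - g with hd
    have hPd : 0 ≤ ⟪d, lam • d - S d⟫ := by
      have h1 := hSneg d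
      have h2 : (0:ℝ) ≤ lam * ⟪d, d⟫ := mul_nonneg hlam.le real_inner_self_nonneg
      rw [inner_sub_right, real_inner_smul_right]; linarith
    have hident : ⟪f - A g, v⟫ + ⟪g, lam • g - S g⟫ - ⟪f, u⟫ = ⟪d, lam • d - S d⟫ := by
      have ev := fun x : H => congrArg (fun z => ⟪z, x⟫) hv1
      have eu := fun x : H => congrArg (fun z => ⟪z, x⟫) hu1
      simp only [inner_sub_left, real_inner_smul_left] at ev eu
      have evv := ev v; have evu := ev u; have evg := ev g
      have euv := eu v; have euu := eu u; have eug := eu g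
      have cvu : lam * ⟪v, u⟫ = lam * ⟪u, v⟫ := by rw [real_inner_comm]
      have cvg : lam * ⟪v, g⟫ = lam * ⟪g, v⟫ := by rw [real_inner_comm]
      have cug : lam * ⟪u, g⟫ = lam * ⟪g, u⟫ := by rw [real_inner_comm]
      simp only [hd, map_sub, inner_sub_left, inner_sub_right, smul_sub,
        real_inner_smul_left, real_inner_smul_right]
      linarith [cvu, cvg, cug, hS v u, hS v g, hS u v, hS u g, hS g v, hS g u,
        hS v v, hS u u, hS g g,
        hA g v, hA g u, hA g g, hA g f, hA u v, hA u u, hA u g, hA u f,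
        real_inner_comm v u, real_inner_comm v g, real_inner_comm u g,
        real_inner_comm f v, real_inner_comm f u, real_inner_comm f g,
        real_inner_comm (S v) u, real_inner_comm (S v) g, real_inner_comm (S u) v,
        real_inner_comm (S u) g, real_inner_comm (S g) v, real_inner_comm (S g) u,
        real_inner_comm (S v) v, real_inner_comm (S u) u, real_inner_comm (S g) g,
        real_inner_comm (A g) v, real_inner_comm (A g) u, real_inner_comm (A g) g,
        real_inner_comm (A g) f, real_inner_comm (A u) v, real_inner_comm (A u) u,
        real_inner_comm (A u) g, real_inner_comm (A u) f]
    linarith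
  -- the minimizer
  set ub := (ContinuousLinearMap.adjoint T) f with hub
  have hubar : lam • ub - S ub + A ub = f := by
    apply ext_inner_right ℝ
    intro y
    have h1 : ⟪lam • ub - S ub + A ub, y⟫ = ⟪ub, lam • y - S y - A y⟫ := by
      rw [inner_add_left, inner_sub_left, real_inner_smul_left, hS, hA,
        inner_sub_right, inner_sub_right, real_inner_smul_right]
      ring
    rw [h1, hub, ContinuousLinearMap.adjoint_inner_left, hT2]
  set w := T (lam • ub - S ub) with hw
  have hw1 : lam • w - S w - A w = lam • ub - S ub := hT1 _
  set g0 := ub - w with hg0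
  have hfg0 : f - A g0 = lam • w - S w := by
    rw [hg0, map_sub, ← hubar, ← hw1]
    abel
  have hRw : R (f - A g0) = w := by rw [hfg0, hR2]
  have hval : ⟪f - A g0, R (f - A g0)⟫ + ⟪g0, lam • g0 - S g0⟫ = ⟪f, T f⟫ := by
    have hfT : ⟪f, T f⟫ = ⟪f, ub⟫ := by
      rw [hub, ContinuousLinearMap.adjoint_inner_right, real_inner_comm]
    rw [hRw, hfg0, hfT, hg0, ← hubar]
    have e1 := congrArg (fun z => ⟪z, ub⟫) hw1
    have e2 := congrArg (fun z => ⟪z, w⟫) hw1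
    simp only [inner_sub_left, real_inner_smul_left] at e1 e2
    have cwu : lam * ⟪w, ub⟫ = lam * ⟪ub, w⟫ := by rw [real_inner_comm]
    simp only [map_sub, inner_sub_left, inner_sub_right, inner_add_left, smul_sub,
      real_inner_smul_left, real_inner_smul_right]
    linarith [cwu, hS w ub, hS ub w, hS w w, hS ub ub,
      hA w ub, hA w w, hA ub ub, hA ub w,
      real_inner_comm w ub,
      real_inner_comm (S w) ub, real_inner_comm (S ub) w,
      real_inner_comm (S w) w, real_inner_comm (S ub) ub,
      real_inner_comm (A w) ub, real_inner_comm (A w) w,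
      real_inner_comm (A ub) ub, real_inner_comm (A ub) w]
  refine le_antisymm (le_ciInf key) ?_
  have hbdd : BddBelow (Set.range fun g : H => ⟪f - A g, R (f - A g)⟫ + ⟪g, lam • g - S g⟫) :=
    ⟨⟪f, T f⟫, by rintro x ⟨g, rfl⟩; exact key g⟩
  exact le_of_le_of_eq (ciInf_le hbdd g0) hval
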